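/- arXiv:2310.00373 — 4 statements merged into one kernel-verified Lean document; each statement's English description precedes it below -/
import Mathlib

section
/- Suppose p and q are Temperley-Lieb link states on {1,...,n} such that every connection of p is either a connection of q or has both endpoints defects in q, and vice versa. Let b be the partition of {1,...,n} whose 2-element parts are exactly the connections of p together with the connections of q, with singletons elsewhere. Then b is planar. -/
open scoped Classical

/-- A Temperley–Lieb (planar) link state on `{0,…,n-1}`, recorded by its set of
connections (2-element parts); all other vertices are defects.  Planarity: whenever
`i < j` are connected, the interval `[i,j]` is a union of parts and contains no defects. -/
structure LinkState (n : ℕ) where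
  pairs : Finset (Finset (Fin n))
  card_two : ∀ s ∈ pairs, s.card = 2
  disj : ∀ s ∈ pairs, ∀ t ∈ pairs, s ≠ t → Disjoint s t
  planar : ∀ s ∈ pairs, ∀ i ∈ s, ∀ j ∈ s, i < j →
    ∀ k : Fin n, i ≤ k → k ≤ j → ∃ t ∈ pairs, k ∈ t ∧ ∀ l ∈ t, i ≤ l ∧ l ≤ j

/-- The defects of a link state: vertices lying in no connection. -/
noncomputable def LinkState.defects {n : ℕ} (q : LinkState n) : Finset (Fin n) :=
  Finset.univ.filter (fun i => ∀ s ∈ q.pairs, i ∉ s)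

/-- If every connection of `p` is a connection of `q` or has both endpoints defects of `q`,
and vice versa, then the partition `b` whose 2-element parts are exactly the connections
of `p` together with those of `q` is planar, i.e. is again a link state. -/
theorem stmt_7 {n : ℕ} (p q : LinkState n)
    (hpq : ∀ s ∈ p.pairs, s ∈ q.pairs ∨ ∀ i ∈ s, ∀ t ∈ q.pairs, i ∉ t)
    (hqp : ∀ s ∈ q.pairs, s ∈ p.pairs ∨ ∀ i ∈ s, ∀ t ∈ p.pairs, i ∉ t) :
    ∃ b : LinkState n, b.pairs = p.pairs ∪ q.pairs := by
  refine ⟨⟨p.pairs ∪ q.pairs, ?_, ?_, ?_⟩, rfl⟩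
  · intro s hs
    rcases Finset.mem_union.1 hs with h | h
    exacts [p.card_two s h, q.card_two s h]
  · intro s hs t ht hst
    rcases Finset.mem_union.1 hs with hs | hs <;> rcases Finset.mem_union.1 ht with ht | ht
    · exact p.disj s hs t ht hst
    · rcases hpq s hs with h | h
      · exact q.disj s h t ht hst
      · exact Finset.disjoint_left.2 fun a ha hat => h a ha t ht hat
    · rcases hqp s hs with h | h
      · exact p.disj s h t ht hst
      · exact Finset.disjoint_left.2 fun a ha hat => h a ha t ht hat
    · exact q.disj s hs t ht hst
  · intro s hs i hi j hj hij k hik hkj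
    rcases Finset.mem_union.1 hs with hs | hs
    · obtain ⟨t, ht, hkt, hb⟩ := p.planar s hs i hi j hj hij k hik hkj
      exact ⟨t, Finset.mem_union_left _ ht, hkt, hb⟩
    · obtain ⟨t, ht, hkt, hb⟩ := q.planar s hs i hi j hj hij k hik hkj
      exact ⟨t, Finset.mem_union_right _ ht, hkt, hb⟩
end

section
/- Let q be a planar link state on {1,...,n} with t ≥ 1 defects. Then there exists a planar link state p on {1,...,n} with t defects such that the multigraph on vertex set {1,...,n} whose edges are the connections of q together with the connections of p is acyclic (a disjoint union of paths), and every connected component contains exactly one defect of q and exactly one defect of p. -/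
open scoped Classical

/-!
Induction on the number of arcs of `q`, for planar matchings of an arbitrary finite vertex set
`V` in a linear order. Take an innermost arc `{u, v}` of `q` and the vertex `c` of `V` next to it,
with `u` between `c` and `v`, and solve the problem for `q` without `{u, v}` on `V \ {u, v}`,
obtaining `p'`. If `c` is a defect of `p'`, add the arc `{c, u}`: in the pair graph the path
`c – u – v` is attached to `c`, and `v` takes over the role of the defect `c`. Otherwise `c` is
matched to some `z` by `p'`; replace `{c, z}` by `{c, u}` and `{z, v}`, which subdivides the edge
`c – z` into `c – u – v – z`. Either way, collapsing `u` and `v` onto `c` identifies the components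
of the two pair graphs, and planarity survives because no vertex of `V` lies between `c`, `u`
and `v`.

Every vertex has at most one neighbour through each matching, so a component containing a defect
of `q`, which has degree at most one, is a path; this gives acyclicity and disjointness. The
components are in bijection with the defects of `q` and with those of `p`, so both have `t`.
-/

open Finset SimpleGraph

section Reachability

variable {α : Type*} {G G' : SimpleGraph α}

theorem SimpleGraph.Reachable.of_mem_pair [DecidableEq α] {a b x y : α} (h : G.Reachable a b)
    (hx : x ∈ ({a, b} : Finset α)) (hy : y ∈ ({a, b} : Finset α)) : G.Reachable x y := by
  simp only [mem_insert, mem_singleton] at hx hy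
  rcases hx with rfl | rfl <;> rcases hy with rfl | rfl
  exacts [.refl _, h, h.symm, .refl _]

theorem reachable_iff_of_retraction (π : α → α)
    (hG'G : ∀ x y, G'.Adj x y → G.Reachable (π x) (π y))
    (hGG' : ∀ x y, G.Adj x y → G'.Reachable x y)
    (hπ : ∀ x, G'.Reachable x (π x)) (x y : α) :
    G'.Reachable x y ↔ G.Reachable (π x) (π y) := by
  simp only [reachable_iff_reflTransGen] at hG'G hGG'
  constructor
  · intro h
    rw [reachable_iff_reflTransGen] at h ⊢
    exact Relation.ReflTransGen.lift' π hG'G _ _ h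
  · intro h
    have h' : G'.Reachable (π x) (π y) := by
      rw [reachable_iff_reflTransGen] at h ⊢
      exact Relation.ReflTransGen.lift' id hGG' _ _ h
    exact (hπ x).trans (h'.trans (hπ y).symm)

def ReachesExactlyOne (G : SimpleGraph α) (V D : Finset α) : Prop :=
  ∀ i ∈ V, ∃! d, d ∈ D ∧ G.Reachable i d

theorem ReachesExactlyOne.of_retraction {V V' D D' : Finset α} {π : α → α}
    (hreach : ∀ x y, G'.Reachable x y ↔ G.Reachable (π x) (π y))
    (hV : ∀ x ∈ V, π x ∈ V') (hD : Set.BijOn π D D') (h : ReachesExactlyOne G V' D') :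
    ReachesExactlyOne G' V D := by
  intro i hi
  obtain ⟨d', ⟨hd', hid'⟩, huniq⟩ := h (π i) (hV i hi)
  obtain ⟨d, hd, rfl⟩ := hD.surjOn hd'
  refine ⟨d, ⟨hd, (hreach i d).2 hid'⟩, fun e ⟨he, hie⟩ => hD.injOn he hd ?_⟩
  exact huniq (π e) ⟨hD.mapsTo he, (hreach i e).1 hie⟩

theorem ReachesExactlyOne.card_le {V A B : Finset α} (hA : ReachesExactlyOne G V A)
    (hB : ReachesExactlyOne G V B) (hAV : A ⊆ V) : A.card ≤ B.card := by
  choose! f hf using fun a (ha : a ∈ A) => (hB a (hAV ha)).exists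
  refine card_le_card_of_injOn f (fun a ha => (hf a ha).1) fun a ha a' ha' hfa => ?_
  have haa' : G.Reachable a a' := (hf a ha).2.trans (hfa ▸ (hf a' ha').2).symm
  exact (hA a (hAV ha)).unique ⟨ha, .refl a⟩ ⟨ha', haa'⟩

end Reachability

section Matching

variable {α : Type*}

structure IsMatching (V : Finset α) (P : Finset (Finset α)) : Prop where
  card_eq_two : ∀ s ∈ P, s.card = 2
  subset : ∀ s ∈ P, s ⊆ V
  pairwiseDisjoint : (P : Set (Finset α)).PairwiseDisjoint id

def matchNeighbors (P : Finset (Finset α)) (x : α) : Set α :=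
  {y | y ≠ x ∧ ∃ s ∈ P, x ∈ s ∧ y ∈ s}

theorem matchNeighbors_eq_empty {P : Finset (Finset α)} {x : α} (hx : ∀ s ∈ P, x ∉ s) :
    matchNeighbors P x = ∅ :=
  Set.eq_empty_of_forall_notMem fun _ ⟨_, s, hs, hxs, _⟩ => hx s hs hxs

namespace IsMatching

variable {V W : Finset α} {P P₀ : Finset (Finset α)} {s t : Finset α} {x y : α}

theorem mono (hP : IsMatching V P) (hVW : V ⊆ W) : IsMatching W P :=
  ⟨hP.card_eq_two, fun s hs => (hP.subset s hs).trans hVW, hP.pairwiseDisjoint⟩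

theorem anti (hP : IsMatching V P) (h : P₀ ⊆ P) : IsMatching V P₀ :=
  ⟨fun s hs => hP.card_eq_two s (h hs), fun s hs => hP.subset s (h hs),
    hP.pairwiseDisjoint.subset (by simpa using h)⟩

theorem insert [DecidableEq α] (hP : IsMatching V P) (hs : s.card = 2) (hsV : s ⊆ V)
    (hdisj : ∀ t ∈ P, s ≠ t → Disjoint s t) : IsMatching V (insert s P) where
  card_eq_two := by simpa [hs] using hP.card_eq_two
  subset := by simpa [hsV] using hP.subset
  pairwiseDisjoint := by
    simpa only [coe_insert] using hP.pairwiseDisjoint.insert hdisj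

theorem ne_of_pair_mem [DecidableEq α] (hP : IsMatching V P) (h : {x, y} ∈ P) : x ≠ y := by
  rintro rfl
  simpa using hP.card_eq_two _ h

theorem eq_of_mem (hP : IsMatching V P) (hs : s ∈ P) (ht : t ∈ P) (hxs : x ∈ s) (hxt : x ∈ t) :
    s = t :=
  hP.pairwiseDisjoint.elim_finset hs ht x hxs hxt

theorem matchNeighbors_subset (hP : IsMatching V P) (hs : s ∈ P) (hx : x ∈ s) :
    matchNeighbors P x ⊆ s := by
  rintro y ⟨-, t, ht, hxt, hyt⟩
  exact hP.eq_of_mem ht hs hxt hx ▸ hyt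

theorem subsingleton_matchNeighbors (hP : IsMatching V P) : (matchNeighbors P x).Subsingleton := by
  classical
  rintro y ⟨hyx, s, hs, hxs, hys⟩ y' ⟨hy'x, s', hs', hxs', hys'⟩
  obtain rfl := hP.eq_of_mem hs' hs hxs' hxs
  obtain ⟨a, b, -, rfl⟩ := Finset.card_eq_two.1 (hP.card_eq_two s' hs')
  simp only [mem_insert, mem_singleton] at hxs hys hys'
  grind

theorem ncard_matchNeighbors_le_one (hP : IsMatching V P) : (matchNeighbors P x).ncard ≤ 1 :=
  (Set.ncard_le_one hP.subsingleton_matchNeighbors.finite).2 fun _ ha _ hb =>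
    hP.subsingleton_matchNeighbors ha hb

end IsMatching

variable [DecidableEq α] {V : Finset α} {A B P Q P' : Finset (Finset α)} {s t : Finset α}
  {c x y : α}

theorem exists_eq_pair_of_mem (hs : s.card = 2) (hx : x ∈ s) : ∃ y, s = {x, y} := by
  obtain ⟨a, b, hab, rfl⟩ := Finset.card_eq_two.1 hs
  rcases mem_insert.1 hx with rfl | hx
  · exact ⟨b, rfl⟩
  · exact ⟨a, by rw [mem_singleton.1 hx, pair_comm]⟩

def defectsIn (V : Finset α) (P : Finset (Finset α)) : Finset α :=
  V.filter fun i => ∀ s ∈ P, i ∉ s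

@[simp]
theorem mem_defectsIn : x ∈ defectsIn V P ↔ x ∈ V ∧ ∀ s ∈ P, x ∉ s :=
  mem_filter

theorem defectsIn_sdiff_erase (hs : s ∈ P) : defectsIn (V \ s) (P.erase s) = defectsIn V P := by
  ext x
  simp only [mem_defectsIn, mem_sdiff, mem_erase]
  exact ⟨fun ⟨⟨hxV, hxs⟩, hx⟩ => ⟨hxV, fun t ht hxt => (eq_or_ne t s).elim (· ▸ hxs <| hxt)
    fun hts => hx t ⟨hts, ht⟩ hxt⟩, fun ⟨hxV, hx⟩ => ⟨⟨hxV, hx s hs⟩, fun t ht => hx t ht.2⟩⟩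

theorem IsMatching.sdiff_erase (hP : IsMatching V P) (hs : s ∈ P) :
    IsMatching (V \ s) (P.erase s) where
  card_eq_two t ht := hP.card_eq_two t (mem_of_mem_erase ht)
  subset t ht := subset_sdiff.2 ⟨hP.subset t (mem_of_mem_erase ht),
    hP.pairwiseDisjoint (mem_of_mem_erase ht) hs (ne_of_mem_erase ht)⟩
  pairwiseDisjoint := hP.pairwiseDisjoint.subset (by simp)

def pairGraph (A B : Finset (Finset α)) : SimpleGraph α :=
  fromRel fun i j => ∃ s ∈ A ∪ B, i ∈ s ∧ j ∈ s

theorem pairGraph_adj : (pairGraph A B).Adj x y ↔ x ≠ y ∧ ∃ s ∈ A ∪ B, x ∈ s ∧ y ∈ s := by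
  simp only [pairGraph, fromRel_adj]
  grind

theorem reachable_pairGraph_of_mem (hs : s ∈ A ∪ B) (hx : x ∈ s) (hy : y ∈ s) :
    (pairGraph A B).Reachable x y := by
  obtain rfl | hxy := eq_or_ne x y
  · rfl
  · exact (pairGraph_adj.2 ⟨hxy, s, hs, hx, hy⟩).reachable

theorem neighborSet_pairGraph :
    (pairGraph A B).neighborSet x = matchNeighbors A x ∪ matchNeighbors B x := by
  ext y
  simp only [mem_neighborSet, pairGraph_adj, matchNeighbors, Set.mem_union, Set.mem_ofPred_eq,
    mem_union]
  grind

theorem mem_of_pairGraph_adj (hA : IsMatching V A) (hB : IsMatching V B)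
    (h : (pairGraph A B).Adj x y) : x ∈ V := by
  obtain ⟨-, s, hs, hx, -⟩ := pairGraph_adj.1 h
  rcases mem_union.1 hs with hs | hs
  exacts [hA.subset s hs hx, hB.subset s hs hx]

/-- A pair common to `Q` and `P` would be a whole component, without a defect of `Q`. -/
theorem disjoint_of_forall_reachable_defect (hQ : IsMatching V Q) (hP : IsMatching V P)
    (h : ∀ i ∈ V, ∃ d ∈ defectsIn V Q, (pairGraph Q P).Reachable i d) : Disjoint Q P := by
  refine disjoint_left.2 fun s hsQ hsP => ?_
  obtain ⟨x, hx⟩ := card_pos.1 ((hQ.card_eq_two s hsQ).symm ▸ two_pos)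
  obtain ⟨d, hd, hxd⟩ := h x (hQ.subset s hsQ hx)
  have hclosed : ∀ y ∈ (s : Set α), ∀ w, (pairGraph Q P).Adj y w → w ∈ s := fun y hy w hyw => by
    rw [← mem_neighborSet, neighborSet_pairGraph] at hyw
    exact Set.union_subset (hQ.matchNeighbors_subset hsQ hy) (hP.matchNeighbors_subset hsP hy) hyw
  have hds : d ∈ (s : Set α) := hxd.mem_subgraphVerts (H := (⊤ : Subgraph _).induce (s : Set α))
    (fun y hy w hyw => ⟨hy, hclosed y hy w hyw, hyw⟩) hx
  exact (mem_defectsIn.1 hd).2 s hsQ hds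

/-- A vertex of degree at most two lying on a cycle has all its neighbours on the cycle, so the
support of a cycle is closed; it must then contain a defect of `Q`, which has degree at most one. -/
theorem isAcyclic_pairGraph (hQ : IsMatching V Q) (hP : IsMatching V P)
    (h : ∀ i ∈ V, ∃ d ∈ defectsIn V Q, (pairGraph Q P).Reachable i d) :
    (pairGraph Q P).IsAcyclic := by
  intro v c hc
  have hcycle : ∀ x ∈ c.support, (pairGraph Q P).neighborSet x = c.toSubgraph.neighborSet x := by
    intro x hx
    refine (Set.eq_of_subset_of_ncard_le (c.toSubgraph.neighborSet_subset x) ?_ ?_).symm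
    · rw [hc.ncard_neighborSet_toSubgraph_eq_two hx, neighborSet_pairGraph]
      exact (Set.ncard_union_le _ _).trans
        (add_le_add hQ.ncard_matchNeighbors_le_one hP.ncard_matchNeighbors_le_one)
    · rw [neighborSet_pairGraph]
      exact hQ.subsingleton_matchNeighbors.finite.union hP.subsingleton_matchNeighbors.finite
  have hclosed : ∀ x ∈ c.toSubgraph.verts, ∀ y, (pairGraph Q P).Adj x y → c.toSubgraph.Adj x y :=
    fun x hx y hxy => by
      rwa [← mem_neighborSet, hcycle x ((Walk.mem_verts_toSubgraph c).1 hx)] at hxy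
  have hv : v ∈ V := by
    have h2 := hc.ncard_neighborSet_toSubgraph_eq_two c.start_mem_support
    obtain ⟨y, hy⟩ := Set.nonempty_of_ncard_ne_zero (h2 ▸ two_ne_zero)
    exact mem_of_pairGraph_adj hQ hP (c.toSubgraph.neighborSet_subset v hy)
  obtain ⟨d, hd, hvd⟩ := h v hv
  have hdc := (Walk.mem_verts_toSubgraph c).1 (hvd.mem_subgraphVerts hclosed
    ((Walk.mem_verts_toSubgraph c).2 c.start_mem_support))
  have h2 := hc.ncard_neighborSet_toSubgraph_eq_two hdc
  rw [← hcycle d hdc, neighborSet_pairGraph, matchNeighbors_eq_empty (mem_defectsIn.1 hd).2,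
    Set.empty_union] at h2
  exact absurd (hP.ncard_matchNeighbors_le_one (x := d)) (by omega)

def OneDefectPerComponent (V : Finset α) (Q P : Finset (Finset α)) : Prop :=
  ReachesExactlyOne (pairGraph Q P) V (defectsIn V Q) ∧
    ReachesExactlyOne (pairGraph Q P) V (defectsIn V P)

theorem oneDefectPerComponent_empty : OneDefectPerComponent V ∅ ∅ := by
  have hbot : pairGraph (∅ : Finset (Finset α)) ∅ = ⊥ := by
    ext
    simp [pairGraph_adj]
  have h : ReachesExactlyOne (pairGraph ∅ ∅) V (defectsIn V ∅) := fun i hi =>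
    ⟨i, by simp [hi], fun d hd => by simpa [hbot, reachable_bot, eq_comm] using hd.2⟩
  exact ⟨h, h⟩

theorem OneDefectPerComponent.card_defectsIn_eq (h : OneDefectPerComponent V Q P) :
    (defectsIn V P).card = (defectsIn V Q).card :=
  le_antisymm (h.2.card_le h.1 (filter_subset _ _)) (h.1.card_le h.2 (filter_subset _ _))

def collapseOnto (s : Finset α) (c x : α) : α :=
  if x ∈ s then c else x

theorem collapseOnto_of_mem (hx : x ∈ s) : collapseOnto s c x = c :=
  if_pos hx

theorem collapseOnto_of_notMem (hx : x ∉ s) : collapseOnto s c x = x :=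
  if_neg hx

/-- After collapsing `s` onto `c`, reachability in the pair graph of `Q` and `P` is reachability in
that of `Q.erase s` and `P'`. -/
theorem OneDefectPerComponent.of_collapseOnto (hQ : IsMatching V Q) (hs : s ∈ Q) (hc : c ∈ V \ s)
    (h' : OneDefectPerComponent (V \ s) (Q.erase s) P')
    (hsc : ∀ x ∈ s, (pairGraph Q P).Reachable x c)
    (hPP' : ∀ t ∈ P, ∀ x ∈ t, ∀ y ∈ t,
      (pairGraph (Q.erase s) P').Reachable (collapseOnto s c x) (collapseOnto s c y))
    (hP'P : ∀ t ∈ P', ∀ x ∈ t, ∀ y ∈ t, (pairGraph Q P).Reachable x y)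
    (hD : Set.BijOn (collapseOnto s c) (defectsIn V P) (defectsIn (V \ s) P')) :
    OneDefectPerComponent V Q P := by
  have hreach := reachable_iff_of_retraction (G := pairGraph (Q.erase s) P')
    (G' := pairGraph Q P) (collapseOnto s c)
    (fun x y hxy => by
      obtain ⟨-, t, ht, hx, hy⟩ := pairGraph_adj.1 hxy
      rcases mem_union.1 ht with htQ | htP
      · by_cases hts : t = s
        · rw [hts] at hx hy
          simp [collapseOnto, hx, hy]
        · have hst : Disjoint t s := hQ.pairwiseDisjoint htQ hs hts
          rw [collapseOnto_of_notMem (disjoint_left.1 hst hx),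
            collapseOnto_of_notMem (disjoint_left.1 hst hy)]
          exact reachable_pairGraph_of_mem (mem_union_left _ (mem_erase.2 ⟨hts, htQ⟩)) hx hy
      · exact hPP' t htP x hx y hy)
    (fun x y hxy => by
      obtain ⟨-, t, ht, hx, hy⟩ := pairGraph_adj.1 hxy
      rcases mem_union.1 ht with htQ | htP
      · exact reachable_pairGraph_of_mem (mem_union_left _ (mem_of_mem_erase htQ)) hx hy
      · exact hP'P t htP x hx y hy)
    (fun x => by
      unfold collapseOnto
      split_ifs with hx
      exacts [hsc x hx, .refl x])
  have hV : ∀ x ∈ V, collapseOnto s c x ∈ V \ s := fun x hx => by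
    unfold collapseOnto
    split_ifs with hxs
    exacts [hc, mem_sdiff.2 ⟨hx, hxs⟩]
  refine ⟨h'.1.of_retraction hreach hV ?_, h'.2.of_retraction hreach hV hD⟩
  rw [defectsIn_sdiff_erase hs]
  exact (Set.bijOn_id _).congr fun x hx =>
    (collapseOnto_of_notMem ((mem_defectsIn.1 hx).2 s hs)).symm

end Matching

section Splice

variable {α : Type*} [DecidableEq α] {V : Finset α} {Q P' : Finset (Finset α)} {u v c z : α}

/-- Together with the arc `{u, v}` of `q`, this subdivides the edge `c – z` of the pair graph into
the path `c – u – v – z`. -/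
def subdivideArc (P' : Finset (Finset α)) (c z u v : α) : Finset (Finset α) :=
  insert {c, u} (insert {z, v} (P'.erase {c, z}))

theorem mem_subdivideArc {t : Finset α} :
    t ∈ subdivideArc P' c z u v ↔ t = {c, u} ∨ t = {z, v} ∨ t ≠ {c, z} ∧ t ∈ P' := by
  simp only [subdivideArc, mem_insert, mem_erase]

theorem isMatching_subdivideArc (hP' : IsMatching (V \ {u, v}) P') (hu : u ∈ V) (hv : v ∈ V)
    (hcz : {c, z} ∈ P') (hcu : c ≠ u) (huv : u ≠ v) :
    IsMatching V (subdivideArc P' c z u v) := by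
  have hcV' : c ∈ V \ {u, v} := hP'.subset _ hcz (by simp)
  have hzV' : z ∈ V \ {u, v} := hP'.subset _ hcz (by simp)
  have hout t (ht : t ∈ P'.erase {c, z}) : c ∉ t ∧ z ∉ t ∧ u ∉ t ∧ v ∉ t := by
    obtain ⟨htcz, ht⟩ := mem_erase.1 ht
    have hdisj := hP'.pairwiseDisjoint ht hcz htcz
    refine ⟨fun h => disjoint_left.1 hdisj h (by simp), fun h => disjoint_left.1 hdisj h (by simp),
      fun h => ?_, fun h => ?_⟩ <;> simpa using (mem_sdiff.1 (hP'.subset t ht h)).2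
  simp only [mem_sdiff, mem_insert, mem_singleton, not_or] at hcV' hzV'
  refine (((hP'.anti (erase_subset _ _)).mono sdiff_subset).insert (card_pair hzV'.2.2)
    (by simp [insert_subset_iff, hv, hzV'.1]) fun t ht _ => ?_).insert (card_pair hcu)
    (by simp [insert_subset_iff, hu, hcV'.1]) fun t ht _ => ?_
  · simp only [disjoint_insert_left, disjoint_singleton_left]
    exact ⟨(hout t ht).2.1, (hout t ht).2.2.2⟩
  · simp only [disjoint_insert_left, disjoint_singleton_left]
    rcases mem_insert.1 ht with rfl | ht
    · simp only [mem_insert, mem_singleton, not_or]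
      exact ⟨⟨hP'.ne_of_pair_mem hcz, hcV'.2.2⟩, Ne.symm hzV'.2.1, huv⟩
    · exact ⟨(hout t ht).1, (hout t ht).2.2.1⟩

theorem defectsIn_subdivideArc (hcz : {c, z} ∈ P') :
    defectsIn V (subdivideArc P' c z u v) = defectsIn (V \ {u, v}) P' := by
  ext x
  simp only [subdivideArc, mem_defectsIn, mem_insert, forall_eq_or_imp, mem_erase, mem_sdiff,
    mem_singleton, not_or]
  constructor
  · rintro ⟨hxV, ⟨hxc, hxu⟩, ⟨hxz, hxv⟩, hxP⟩
    refine ⟨⟨hxV, hxu, hxv⟩, fun t ht hxt => ?_⟩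
    by_cases htcz : t = {c, z}
    · simp [htcz, hxc, hxz] at hxt
    · exact hxP t ⟨htcz, ht⟩ hxt
  · rintro ⟨⟨hxV, hxu, hxv⟩, hxP⟩
    have hxcz : x ∉ ({c, z} : Finset α) := hxP _ hcz
    simp only [mem_insert, mem_singleton, not_or] at hxcz
    exact ⟨hxV, ⟨hxcz.1, hxu⟩, ⟨hxcz.2, hxv⟩, fun t ht => hxP t ht.2⟩

/-- The defect `c` of `P'` is traded for the new defect `v`. -/
theorem bijOn_collapseOnto_insert (hP' : IsMatching (V \ {u, v}) P') (hv : v ∈ V) (huv : u ≠ v)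
    (hc : c ∈ defectsIn (V \ {u, v}) P') :
    Set.BijOn (collapseOnto {u, v} c) (defectsIn V (insert {c, u} P'))
      (defectsIn (V \ {u, v}) P') := by
  have hD x : x ∈ defectsIn V (insert {c, u} P') ↔ x ∈ V ∧ x ≠ c ∧ x ≠ u ∧ ∀ t ∈ P', x ∉ t := by
    simp only [mem_defectsIn, mem_insert, forall_eq_or_imp, mem_singleton, not_or, and_assoc]
  have hD' x : x ∈ defectsIn (V \ {u, v}) P' ↔ x ∈ V ∧ x ≠ u ∧ x ≠ v ∧ ∀ t ∈ P', x ∉ t := by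
    simp only [mem_defectsIn, mem_sdiff, mem_insert, mem_singleton, not_or, and_assoc]
  have hvP' t (ht : t ∈ P') : v ∉ t := fun h => by simpa using (mem_sdiff.1 (hP'.subset t ht h)).2
  refine ⟨fun x hx => ?_, fun x hx y hy hxy => ?_, fun d hd => ?_⟩
  · rw [mem_coe, hD] at hx
    rw [mem_coe]
    by_cases hxv : x = v
    · rwa [hxv, collapseOnto_of_mem (by simp)]
    · rw [collapseOnto_of_notMem (by simp [hx.2.2.1, hxv]), hD']
      exact ⟨hx.1, hx.2.2.1, hxv, hx.2.2.2⟩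
  · rw [mem_coe, hD] at hx hy
    rw [hD'] at hc
    simp only [collapseOnto, mem_insert, mem_singleton] at hxy
    split_ifs at hxy <;> grind
  · rw [mem_coe, hD'] at hd
    by_cases hdc : d = c
    · refine ⟨v, mem_coe.2 ((hD v).2 ⟨hv, ?_, Ne.symm huv, hvP'⟩), ?_⟩
      · rintro rfl
        exact hd.2.2.1 hdc
      · rw [collapseOnto_of_mem (by simp), hdc]
    · exact ⟨d, mem_coe.2 ((hD d).2 ⟨hd.1, hdc, hd.2.1, hd.2.2.2⟩),
        collapseOnto_of_notMem (by simp [hd.2.1, hd.2.2.1])⟩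

theorem oneDefectPerComponent_insert (hQ : IsMatching V Q) (huv : {u, v} ∈ Q)
    (hP' : IsMatching (V \ {u, v}) P') (hc : c ∈ defectsIn (V \ {u, v}) P')
    (h' : OneDefectPerComponent (V \ {u, v}) (Q.erase {u, v}) P') :
    OneDefectPerComponent V Q (insert {c, u} P') := by
  have hcV' : c ∈ V \ {u, v} := (mem_defectsIn.1 hc).1
  have hfix x (hx : x ∈ V \ {u, v}) : collapseOnto {u, v} c x = x :=
    collapseOnto_of_notMem (mem_sdiff.1 hx).2
  have hcu : (pairGraph Q (insert {c, u} P')).Reachable c u :=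
    reachable_pairGraph_of_mem (mem_union_right _ (mem_insert_self _ _)) (by simp) (by simp)
  have huv' : (pairGraph Q (insert {c, u} P')).Reachable u v :=
    reachable_pairGraph_of_mem (mem_union_left _ huv) (by simp) (by simp)
  refine h'.of_collapseOnto hQ huv hcV' ?_ ?_ ?_
    (bijOn_collapseOnto_insert hP' (hQ.subset _ huv (by simp)) (hQ.ne_of_pair_mem huv) hc)
  · simp only [mem_insert, mem_singleton, forall_eq_or_imp, forall_eq]
    exact ⟨hcu.symm, (hcu.trans huv').symm⟩
  · intro t ht x hx y hy
    rcases mem_insert.1 ht with rfl | ht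
    · have hcol : ∀ w ∈ ({c, u} : Finset α), collapseOnto {u, v} c w = c := by
        simp [hfix c hcV', collapseOnto_of_mem]
      rw [hcol x hx, hcol y hy]
    · rw [hfix x (hP'.subset t ht hx), hfix y (hP'.subset t ht hy)]
      exact reachable_pairGraph_of_mem (mem_union_right _ ht) hx hy
  · intro t ht x hx y hy
    exact reachable_pairGraph_of_mem (mem_union_right _ (mem_insert_of_mem ht)) hx hy

theorem oneDefectPerComponent_subdivideArc (hQ : IsMatching V Q) (huv : {u, v} ∈ Q)
    (hP' : IsMatching (V \ {u, v}) P') (hcz : {c, z} ∈ P')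
    (h' : OneDefectPerComponent (V \ {u, v}) (Q.erase {u, v}) P') :
    OneDefectPerComponent V Q (subdivideArc P' c z u v) := by
  have hcV' : c ∈ V \ {u, v} := hP'.subset _ hcz (by simp)
  have hzV' : z ∈ V \ {u, v} := hP'.subset _ hcz (by simp)
  have hfix x (hx : x ∈ V \ {u, v}) : collapseOnto {u, v} c x = x :=
    collapseOnto_of_notMem (mem_sdiff.1 hx).2
  have hreach {a b : α} (h : {a, b} ∈ Q ∪ subdivideArc P' c z u v) :
      (pairGraph Q (subdivideArc P' c z u v)).Reachable a b :=
    reachable_pairGraph_of_mem h (by simp) (by simp)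
  have hcu := hreach (mem_union_right _ (mem_subdivideArc.2 (Or.inl rfl)))
  have huv' := hreach (mem_union_left _ huv)
  have hvz := (hreach (mem_union_right _ (mem_subdivideArc.2 (Or.inr (Or.inl rfl))))).symm
  refine h'.of_collapseOnto hQ huv hcV' ?_ ?_ ?_ ?_
  · simp only [mem_insert, mem_singleton, forall_eq_or_imp, forall_eq]
    exact ⟨hcu.symm, (hcu.trans huv').symm⟩
  · intro t ht x hx y hy
    rcases mem_subdivideArc.1 ht with rfl | rfl | ⟨-, ht⟩
    · have hcol : ∀ w ∈ ({c, u} : Finset α), collapseOnto {u, v} c w = c := by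
        simp [hfix c hcV', collapseOnto_of_mem]
      rw [hcol x hx, hcol y hy]
    · have hcol : ∀ w ∈ ({z, v} : Finset α), collapseOnto {u, v} c w ∈ ({c, z} : Finset α) := by
        simp [hfix z hzV', collapseOnto_of_mem]
      exact reachable_pairGraph_of_mem (mem_union_right _ hcz) (hcol x hx) (hcol y hy)
    · rw [hfix x (hP'.subset t ht hx), hfix y (hP'.subset t ht hy)]
      exact reachable_pairGraph_of_mem (mem_union_right _ ht) hx hy
  · intro t ht x hx y hy
    by_cases htcz : t = {c, z}
    · rw [htcz] at hx hy
      exact (hcu.trans (huv'.trans hvz)).of_mem_pair hx hy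
    · exact reachable_pairGraph_of_mem
        (mem_union_right _ (mem_subdivideArc.2 (Or.inr (Or.inr ⟨htcz, ht⟩)))) hx hy
  · rw [defectsIn_subdivideArc hcz]
    exact (Set.bijOn_id _).congr fun x hx => (hfix x (mem_defectsIn.1 hx).1).symm

end Splice

section Planar

variable {α : Type*} [LinearOrder α] {V : Finset α} {P Q P' : Finset (Finset α)}
  {s t : Finset α} {i j k l w x u v c z : α}

def Under (k : α) (s : Finset α) : Prop :=
  ∃ i ∈ s, ∃ j ∈ s, i < k ∧ k < j

@[simp]
theorem under_pair : Under k {i, j} ↔ i < k ∧ k < j ∨ j < k ∧ k < i := by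
  simp only [Under, mem_insert, mem_singleton, exists_eq_or_imp, exists_eq_left]
  grind

theorem Under.trans (h : Under k t) (ht : ∀ l ∈ t, Under l s) : Under k s := by
  obtain ⟨i, hi, j, hj, hik, hkj⟩ := h
  obtain ⟨a, ha, -, -, hai, -⟩ := ht i hi
  obtain ⟨-, -, b, hb, -, hjb⟩ := ht j hj
  exact ⟨a, ha, b, hb, hai.trans hik, hkj.trans hjb⟩

theorem not_under_of_mem (hs : s.card = 2) (hk : k ∈ s) : ¬Under k s := by
  rintro ⟨i, hi, j, hj, hik, hkj⟩
  obtain ⟨a, b, -, rfl⟩ := Finset.card_eq_two.1 hs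
  simp only [mem_insert, mem_singleton] at hi hj hk
  grind

theorem mem_Icc_of_card_eq_two (hs : s.card = 2) (hi : i ∈ s) (hj : j ∈ s) (hij : i < j)
    (hl : l ∈ s) : l ∈ Set.Icc i j := by
  obtain ⟨a, b, -, rfl⟩ := Finset.card_eq_two.1 hs
  simp only [mem_insert, mem_singleton] at hi hj hl
  simp only [Set.mem_Icc]
  grind

def SameSide (w x y : α) : Prop :=
  (w < x ↔ w < y) ∧ (x < w ↔ y < w)

theorem under_congr (h : ∀ w ∈ s, SameSide w x u) : Under x s ↔ Under u s := by
  constructor <;> rintro ⟨i, hi, j, hj, hix, hxj⟩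
  exacts [⟨i, hi, j, hj, (h i hi).1.1 hix, (h j hj).2.1 hxj⟩,
    ⟨i, hi, j, hj, (h i hi).1.2 hix, (h j hj).2.2 hxj⟩]

/-- Planarity: a vertex of `V` under an arc is matched, by an arc lying under the same arc. This
rules out both crossings and defects under arcs. -/
structure IsPlanarMatching (V : Finset α) (P : Finset (Finset α)) : Prop
    extends IsMatching V P where
  planar : ∀ s ∈ P, ∀ k ∈ V, Under k s → ∃ t ∈ P, k ∈ t ∧ ∀ l ∈ t, Under l s

namespace IsPlanarMatching

theorem under_iff (hP : IsPlanarMatching V P) (hs : s ∈ P) (ht : t ∈ P) (hx : x ∈ t)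
    (hy : u ∈ t) : Under x s ↔ Under u s := by
  have key : ∀ a ∈ t, ∀ b ∈ t, Under a s → Under b s := fun a ha b hb hab => by
    obtain ⟨t', ht', hat', hunder⟩ := hP.planar s hs a (hP.subset t ht ha) hab
    exact hunder b (hP.eq_of_mem ht ht' ha hat' ▸ hb)
  exact ⟨key x hx u hy, key u hy x hx⟩

theorem sdiff_erase (hP : IsPlanarMatching V P) (hs : s ∈ P) :
    IsPlanarMatching (V \ s) (P.erase s) where
  toIsMatching := hP.toIsMatching.sdiff_erase hs
  planar t ht k hk hkt := by
    obtain ⟨t', ht', hkt', hl⟩ := hP.planar t (mem_of_mem_erase ht) k (mem_sdiff.1 hk).1 hkt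
    exact ⟨t', mem_erase.2 ⟨fun h => (mem_sdiff.1 hk).2 (h ▸ hkt'), ht'⟩, hkt', hl⟩

/-- An arc with fewest vertices of `V` under it has none. -/
theorem exists_innermost (hP : IsPlanarMatching V P) (hne : P.Nonempty) :
    ∃ s ∈ P, ∀ k ∈ V, ¬Under k s := by
  obtain ⟨s, hs, hmin⟩ := exists_min_image P (fun s => (V.filter (Under · s)).card) hne
  refine ⟨s, hs, fun k hk hks => ?_⟩
  obtain ⟨t, ht, hkt, hts⟩ := hP.planar s hs k hk hks
  refine (hmin t ht).not_gt (card_lt_card ((ssubset_iff_of_subset fun l hl => ?_).2 ⟨k, ?_, ?_⟩))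
  · simp only [mem_filter] at hl ⊢
    exact ⟨hl.1, hl.2.trans hts⟩
  · simp [hk, hks]
  · simp [not_under_of_mem (hP.card_eq_two t ht) hkt]

/-- An innermost arc `{u, v}` together with the nearest vertex `c` of `V` beside it. -/
theorem exists_splice_site (hP : IsPlanarMatching V P) (hne : P.Nonempty)
    (hD : (defectsIn V P).Nonempty) :
    ∃ u v c, {u, v} ∈ P ∧ c ∈ V \ {u, v} ∧ Under u {c, v} ∧ ∀ x ∈ V \ {u, v}, ¬Under x {c, v} := by
  obtain ⟨s, hs, hinner⟩ := hP.exists_innermost hne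
  obtain ⟨a, b, hab, rfl⟩ : ∃ a b, a < b ∧ s = {a, b} := by
    obtain ⟨a, b, hab, rfl⟩ := Finset.card_eq_two.1 (hP.card_eq_two s hs)
    rcases hab.lt_or_gt with h | h
    exacts [⟨a, b, h, rfl⟩, ⟨b, a, h, pair_comm a b⟩]
  simp only [under_pair] at hinner
  obtain ⟨d, hd⟩ := hD
  have hd' : d ∈ V \ {a, b} := mem_sdiff.2 ⟨(mem_defectsIn.1 hd).1, (mem_defectsIn.1 hd).2 _ hs⟩
  by_cases hleft : ∃ x ∈ V \ {a, b}, x < a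
  · obtain ⟨x, hx, hxa⟩ := hleft
    obtain ⟨c, hc, hcmax⟩ :=
      exists_max_image ((V \ {a, b}).filter (· < a)) id ⟨x, mem_filter.2 ⟨hx, hxa⟩⟩
    obtain ⟨hc, hca⟩ := mem_filter.1 hc
    refine ⟨a, b, c, hs, hc, by simp [hca, hab], fun y hy hyu => ?_⟩
    have hyc : y < a → y ≤ c := fun h => hcmax y (mem_filter.2 ⟨hy, h⟩)
    have := hinner y (mem_sdiff.1 hy).1
    simp only [mem_sdiff, mem_insert, mem_singleton, under_pair] at hy hyu
    grind
  · push Not at hleft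
    obtain ⟨c, hc, hcmin⟩ := exists_min_image (V \ {a, b}) id ⟨d, hd'⟩
    have := hinner c (mem_sdiff.1 hc).1
    have hcab := (mem_sdiff.1 hc).2
    have := hleft c hc
    refine ⟨b, a, c, pair_comm a b ▸ hs, pair_comm a b ▸ hc, ?_, fun y hy hyu => ?_⟩
    · simp only [mem_insert, mem_singleton, under_pair] at hcab ⊢
      grind
    · have := hcmin y (pair_comm a b ▸ hy)
      simp only [id, under_pair] at hyu this
      grind

end IsPlanarMatching

theorem sameSide_of_gap (hcuv : Under u {c, v}) (hgap : ∀ x ∈ V \ {u, v}, ¬Under x {c, v})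
    (hw : w ∈ V \ {u, v}) (hwc : w ≠ c) : SameSide w c u ∧ SameSide w c v := by
  have := hgap w hw
  simp only [mem_sdiff, mem_insert, mem_singleton, not_or] at hw
  simp only [SameSide, under_pair] at *
  grind

theorem not_under_of_gap (hcuv : Under u {c, v}) (hgap : ∀ x ∈ V \ {u, v}, ¬Under x {c, v})
    (hk : k ∈ V) : ¬Under k {c, u} := by
  intro hku
  by_cases hkuv : k ∈ ({u, v} : Finset α)
  · simp only [mem_insert, mem_singleton, under_pair] at hkuv hku hcuv
    grind
  · have := hgap k (mem_sdiff.2 ⟨hk, hkuv⟩)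
    simp only [under_pair] at *
    grind

theorem under_iff_of_gap (hcuv : Under u {c, v}) (hgap : ∀ x ∈ V \ {u, v}, ¬Under x {c, v})
    (hs : s ⊆ V \ {u, v}) (hcs : c ∉ s) : (Under u s ↔ Under c s) ∧ (Under v s ↔ Under c s) := by
  have hside w (hw : w ∈ s) := sameSide_of_gap hcuv hgap (hs hw) fun h => hcs (h ▸ hw)
  exact ⟨(under_congr fun w hw => (hside w hw).1).symm,
    (under_congr fun w hw => (hside w hw).2).symm⟩

theorem isPlanarMatching_insert (hP' : IsPlanarMatching (V \ {u, v}) P') (hu : u ∈ V)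
    (hc : c ∈ defectsIn (V \ {u, v}) P') (hcuv : Under u {c, v})
    (hgap : ∀ x ∈ V \ {u, v}, ¬Under x {c, v}) : IsPlanarMatching V (insert {c, u} P') := by
  obtain ⟨hcV', hcP'⟩ := mem_defectsIn.1 hc
  have hcu : c ≠ u := by simp only [under_pair] at hcuv; grind
  refine ⟨(hP'.mono sdiff_subset).insert (card_pair hcu) ?_ fun t ht _ => ?_, ?_⟩
  · simp [insert_subset_iff, hu, (mem_sdiff.1 hcV').1]
  · simp only [disjoint_insert_left, disjoint_singleton_left]
    exact ⟨hcP' t ht, fun h => by simpa using (mem_sdiff.1 (hP'.subset t ht h)).2⟩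
  rintro s hs k hk hks
  rcases mem_insert.1 hs with rfl | hs
  · exact absurd hks (not_under_of_gap hcuv hgap hk)
  by_cases hk' : k ∈ V \ {u, v}
  · obtain ⟨t, ht, hkt, hl⟩ := hP'.planar s hs k hk' hks
    exact ⟨t, mem_insert_of_mem ht, hkt, hl⟩
  · have hkuv : k = u ∨ k = v := by simp [hk] at hk'; tauto
    have hcs : Under c s := by
      have := under_iff_of_gap hcuv hgap (hP'.subset s hs) (hcP' s hs)
      rcases hkuv with rfl | rfl <;> tauto
    obtain ⟨t, ht, hct, -⟩ := hP'.planar s hs c hcV' hcs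
    exact absurd hct (hcP' t ht)

theorem IsPlanarMatching.planar_subdivideArc_outer (hP' : IsPlanarMatching (V \ {u, v}) P')
    (hcz : {c, z} ∈ P') (hcuv : Under u {c, v}) (hgap : ∀ x ∈ V \ {u, v}, ¬Under x {c, v})
    (hk : k ∈ V) (hks : Under k {z, v}) :
    ∃ t ∈ subdivideArc P' c z u v, k ∈ t ∧ ∀ l ∈ t, Under l {z, v} := by
  have hzV' : z ∈ V \ {u, v} := hP'.subset _ hcz (by simp)
  have hcz' : c ≠ z := hP'.ne_of_pair_mem hcz
  by_cases hkcu : k ∈ ({c, u} : Finset α)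
  · refine ⟨{c, u}, mem_subdivideArc.2 (Or.inl rfl), hkcu, ?_⟩
    have := sameSide_of_gap hcuv hgap hzV' hcz'.symm
    simp only [mem_insert, mem_singleton, forall_eq_or_imp, forall_eq, under_pair,
      SameSide] at hkcu hks hcuv this ⊢
    grind
  have hkz : k ≠ z := by rintro rfl; simp at hks
  have hkc : k ≠ c := fun h => hkcu (by simp [h])
  have hkV' : k ∈ V \ {u, v} := by
    simp only [mem_insert, mem_singleton, not_or] at hkcu
    have : k ≠ v := by rintro rfl; simp at hks
    simp [hk, hkcu.2, this]
  -- `c`, `u` and `v` lie on the same side of every other vertex, so `k` was under `{c, z}`.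
  have hkcz : Under k {c, z} := by
    have := sameSide_of_gap hcuv hgap hkV' hkc
    simp only [under_pair, SameSide] at hks this ⊢
    grind
  obtain ⟨t, ht, hkt, hl⟩ := hP'.planar _ hcz k hkV' hkcz
  have htcz : t ≠ {c, z} := by rintro rfl; simp [hkc, hkz] at hkt
  refine ⟨t, mem_subdivideArc.2 (Or.inr (Or.inr ⟨htcz, ht⟩)), hkt, fun l hlt => ?_⟩
  have hlcz := hl l hlt
  have hlc : l ≠ c := by rintro rfl; simp at hlcz
  have := sameSide_of_gap hcuv hgap (hP'.subset t ht hlt) hlc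
  simp only [under_pair, SameSide] at hlcz this ⊢
  grind

theorem IsPlanarMatching.planar_subdivideArc_of_mem (hP' : IsPlanarMatching (V \ {u, v}) P')
    (hcz : {c, z} ∈ P') (hcuv : Under u {c, v}) (hgap : ∀ x ∈ V \ {u, v}, ¬Under x {c, v})
    (hs : s ∈ P') (hscz : s ≠ {c, z}) (hk : k ∈ V) (hks : Under k s) :
    ∃ t ∈ subdivideArc P' c z u v, k ∈ t ∧ ∀ l ∈ t, Under l s := by
  have hcs : c ∉ s := fun h => disjoint_left.1 (hP'.pairwiseDisjoint hs hcz hscz) h (by simp)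
  -- `c`, `u`, `v` and `z` are either all under `s` or none of them is.
  obtain ⟨huc, hvc⟩ := under_iff_of_gap hcuv hgap (hP'.subset s hs) hcs
  have hzc : Under z s ↔ Under c s := hP'.under_iff hs hcz (by simp) (by simp)
  by_cases hkcu : k ∈ ({c, u} : Finset α)
  · refine ⟨{c, u}, mem_subdivideArc.2 (Or.inl rfl), hkcu, ?_⟩
    simp only [mem_insert, mem_singleton] at hkcu
    simp only [mem_insert, mem_singleton, forall_eq_or_imp, forall_eq]
    rcases hkcu with rfl | rfl <;> tauto
  by_cases hkzv : k ∈ ({z, v} : Finset α)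
  · refine ⟨{z, v}, mem_subdivideArc.2 (Or.inr (Or.inl rfl)), hkzv, ?_⟩
    simp only [mem_insert, mem_singleton] at hkzv
    simp only [mem_insert, mem_singleton, forall_eq_or_imp, forall_eq]
    rcases hkzv with rfl | rfl <;> tauto
  simp only [mem_insert, mem_singleton, not_or] at hkcu hkzv
  obtain ⟨t, ht, hkt, hl⟩ := hP'.planar s hs k (by simp [hk, hkcu.2, hkzv.2]) hks
  have htcz : t ≠ {c, z} := by rintro rfl; simp [hkcu.1, hkzv.1] at hkt
  exact ⟨t, mem_subdivideArc.2 (Or.inr (Or.inr ⟨htcz, ht⟩)), hkt, hl⟩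

theorem isPlanarMatching_subdivideArc (hP' : IsPlanarMatching (V \ {u, v}) P') (hu : u ∈ V)
    (hv : v ∈ V) (hcz : {c, z} ∈ P') (hcuv : Under u {c, v})
    (hgap : ∀ x ∈ V \ {u, v}, ¬Under x {c, v}) :
    IsPlanarMatching V (subdivideArc P' c z u v) := by
  have ⟨hcu, huv⟩ : c ≠ u ∧ u ≠ v := by simp only [under_pair] at hcuv; grind
  refine ⟨isMatching_subdivideArc hP'.toIsMatching hu hv hcz hcu huv, fun s hs k hk hks => ?_⟩
  rcases mem_subdivideArc.1 hs with rfl | rfl | ⟨hscz, hs⟩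
  · exact absurd hks (not_under_of_gap hcuv hgap hk)
  · exact hP'.planar_subdivideArc_outer hcz hcuv hgap hk hks
  · exact hP'.planar_subdivideArc_of_mem hcz hcuv hgap hs hscz hk hks

theorem IsPlanarMatching.exists_oneDefectPerComponent (hQ : IsPlanarMatching V Q)
    (hD : (defectsIn V Q).Nonempty) : ∃ P, IsPlanarMatching V P ∧ OneDefectPerComponent V Q P := by
  induction Q using Finset.strongInduction generalizing V with
  | H Q ih =>
  obtain rfl | hne := Q.eq_empty_or_nonempty
  · exact ⟨∅, ⟨⟨by simp, by simp, by simp⟩, by simp⟩, oneDefectPerComponent_empty⟩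
  obtain ⟨u, v, c, huv, hc, hcuv, hgap⟩ := hQ.exists_splice_site hne hD
  obtain ⟨P', hP', h'⟩ := ih _ (erase_ssubset huv) (hQ.sdiff_erase huv)
    (by rwa [defectsIn_sdiff_erase huv])
  have hu : u ∈ V := hQ.subset _ huv (by simp)
  have hv : v ∈ V := hQ.subset _ huv (by simp)
  by_cases hcd : c ∈ defectsIn (V \ {u, v}) P'
  · exact ⟨_, isPlanarMatching_insert hP' hu hcd hcuv hgap,
      oneDefectPerComponent_insert hQ.toIsMatching huv hP'.toIsMatching hcd h'⟩
  · obtain ⟨t, ht, hct⟩ : ∃ t ∈ P', c ∈ t := by simpa [hc] using hcd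
    obtain ⟨z, rfl⟩ := exists_eq_pair_of_mem (hP'.card_eq_two t ht) hct
    exact ⟨_, isPlanarMatching_subdivideArc hP' hu hv ht hcuv hgap,
      oneDefectPerComponent_subdivideArc hQ.toIsMatching huv hP'.toIsMatching ht h'⟩

end Planar

namespace LinkState

variable {n : ℕ}

theorem isPlanarMatching (q : LinkState n) : IsPlanarMatching univ q.pairs where
  card_eq_two := q.card_two
  subset s _ := subset_univ s
  pairwiseDisjoint s hs t ht hst := q.disj s hs t ht hst
  planar := by
    rintro s hs k - ⟨i, hi, j, hj, hik, hkj⟩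
    obtain ⟨t, ht, hkt, hl⟩ := q.planar s hs i hi j hj (hik.trans hkj) k hik.le hkj.le
    have hts : Disjoint t s := q.disj t ht s hs fun h =>
      not_under_of_mem (q.card_two s hs) (h ▸ hkt) ⟨i, hi, j, hj, hik, hkj⟩
    refine ⟨t, ht, hkt, fun l hlt => ⟨i, hi, j, hj, (hl l hlt).1.lt_of_ne ?_,
      (hl l hlt).2.lt_of_ne ?_⟩⟩
    · rintro rfl
      exact disjoint_left.1 hts hlt hi
    · rintro rfl
      exact disjoint_left.1 hts hlt hj

def ofIsPlanarMatching {P : Finset (Finset (Fin n))} (hP : IsPlanarMatching univ P) :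
    LinkState n where
  pairs := P
  card_two := hP.card_eq_two
  disj s hs t ht hst := hP.pairwiseDisjoint hs ht hst
  planar s hs i hi j hj hij k hik hkj := by
    have hIcc l := mem_Icc_of_card_eq_two (l := l) (hP.card_eq_two s hs) hi hj hij
    rcases hik.eq_or_lt with rfl | hik
    · exact ⟨s, hs, hi, hIcc⟩
    rcases hkj.eq_or_lt with rfl | hkj
    · exact ⟨s, hs, hj, hIcc⟩
    obtain ⟨t, ht, hkt, hl⟩ := hP.planar s hs k (mem_univ k) ⟨i, hi, j, hj, hik, hkj⟩
    refine ⟨t, ht, hkt, fun l hlt => ?_⟩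
    obtain ⟨a, ha, b, hb, hal, hlb⟩ := hl l hlt
    exact ⟨(hIcc a ha).1.trans hal.le, hlb.le.trans (hIcc b hb).2⟩

theorem defects_eq (q : LinkState n) : q.defects = defectsIn univ q.pairs := by
  ext
  simp [LinkState.defects]

end LinkState

/-- For any planar link state `q` with `t ≥ 1` defects there is a planar link state `p`
with `t` defects such that the pair graph (edges: the connections of `q` together with
those of `p`) is acyclic as a multigraph, and every connected component contains exactly
one defect of `q` and exactly one defect of `p`. -/
theorem stmt_10 {n : ℕ} (q : LinkState n) (t : ℕ) (ht : q.defects.card = t)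
    (htpos : 1 ≤ t) :
    ∃ p : LinkState n, p.defects.card = t ∧
      Disjoint q.pairs p.pairs ∧
      (SimpleGraph.fromRel
        (fun i j => ∃ s ∈ q.pairs ∪ p.pairs, i ∈ s ∧ j ∈ s)).IsAcyclic ∧
      (∀ i : Fin n, ∃! d : Fin n, d ∈ q.defects ∧
        (SimpleGraph.fromRel
          (fun i j => ∃ s ∈ q.pairs ∪ p.pairs, i ∈ s ∧ j ∈ s)).Reachable i d) ∧
      (∀ i : Fin n, ∃! d : Fin n, d ∈ p.defects ∧
        (SimpleGraph.fromRel
          (fun i j => ∃ s ∈ q.pairs ∪ p.pairs, i ∈ s ∧ j ∈ s)).Reachable i d) := by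
  have hq := q.isPlanarMatching
  obtain ⟨P, hP, hcomp⟩ := hq.exists_oneDefectPerComponent
    (by rw [← q.defects_eq, ← card_pos, ht]; omega)
  set p := LinkState.ofIsPlanarMatching hP
  have hreach i (hi : i ∈ univ) := (hcomp.1 i hi).exists
  refine ⟨p, ?_, disjoint_of_forall_reachable_defect hq.toIsMatching hP.toIsMatching hreach,
    isAcyclic_pairGraph hq.toIsMatching hP.toIsMatching hreach,
    fun i => q.defects_eq ▸ hcomp.1 i (mem_univ i), fun i => p.defects_eq ▸ hcomp.2 i (mem_univ i)⟩
  rw [p.defects_eq, ← ht, q.defects_eq]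
  exact hcomp.card_defectsIn_eq
end

section
/- Let A be an associative unital R-algebra which is free as R-module on a basis indexed by triples (p, σ, q) with p, q ∈ M(λ), σ ∈ G(λ) for λ in a poset Λ (where each G(λ) is a group and M(λ) a finite set), satisfying the diagram-like multiplication rule: the product of basis elements C^{σ1}_{p1,q1} · C^{σ2}_{p2,q2} equals κ·C^{σ}_{p,q} where the associated index λ ≤ λ1, λ2; λ and κ depend only on (q1,p2); σ depends only on (σ1,q1,p2,σ2); p depends only on (p1,σ1,q1,p2); and if λ = λ2 then q = q2 and σσ2^{-1} depends only on (σ1,q1,p2). Then for any a ∈ A, λ ∈ Λ, p, q ∈ M(λ), σ ∈ G(λ): a·C^{σ}_{p,q} ≡ Σ_{σ',p'} r_a(p', σ'σ^{-1}, p) C^{σ'}_{p',q} modulo the span I_{<λ} of basis elements indexed by μ < λ, where the coefficients r_a(p', τ, p) ∈ R depend only on a, p', τ, p (i.e. a diagram-like algebra is naive-cellular). -/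
/-!
Both sides of (W3) are `R`-linear in `a` once `r_a` is taken linear in `a`, so it suffices to
treat a basis element `a = C^{σ₁}_{p₁,q₁}`. Its product with `C^σ_{p,q}` is `κ C^{σ''}_{p'',q''}`
at a level `λ ≤ l`. If `λ < l` this lies in `I_{<l}`, and `r_a` is taken to vanish. If `λ = l`,
then `q'' = q`, `σ'' = τ σ` with `τ := σ''(σ₁, q₁, p, 1)` independent of `σ`, and `p''` does not
depend on `σ` either, so `r_a(p', τ', p) := κ [p' = p'' ∧ τ' = τ]` reproduces the product exactly.
-/

open Finset

theorem Module.Basis.map_mem_of_forall_basis {ι R M N : Type*} [Semiring R] [AddCommMonoid M]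
    [Module R M] [AddCommMonoid N] [Module R N] (b : Module.Basis ι R M) (f : M →ₗ[R] N)
    {S : Submodule R N} (h : ∀ i, f (b i) ∈ S) (x : M) : f x ∈ S := by
  have : Submodule.span R (Set.range b) ≤ S.comap f :=
    Submodule.span_le.2 (Set.range_subset_iff.2 h)
  exact this (b.span_eq ▸ Submodule.mem_top)

theorem sum_sum_ite_smul {R G M N : Type*} [Semiring R] [Group G] [Fintype G] [Fintype M]
    [AddCommMonoid N] [Module R N] (p₀ : M) (τ σ : G) (k : R) (f : M → G → N) :
    open Classical in
    ∑ σ' : G, ∑ p' : M, (if p₀ = p' ∧ τ = σ' * σ⁻¹ then k else 0) • f p' σ' =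
      k • f p₀ (τ * σ) := by
  classical
  simp [ite_smul, eq_mul_inv_iff_mul_eq, ite_and, eq_comm]

theorem apply_eq_apply_subst {Λ X : Type*} {M G : Λ → Type*} (C : ∀ l : Λ, M l → G l → M l → X)
    {μ l : Λ} (h : μ = l) (p : M μ) (σ : G μ) (q : M μ) :
    C μ p σ q = C l (h ▸ p) (h ▸ σ) (h ▸ q) := by
  subst h; rfl

section DiagramLike

variable {R A Λ : Type*} [CommRing R] [Ring A] [Algebra R A]
  {G : Λ → Type*} [∀ l, Group (G l)] {M : Λ → Type*}

variable (R) in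
def lowerSpan [LT Λ] (C : ∀ l : Λ, M l → G l → M l → A) (l : Λ) : Submodule R A :=
  Submodule.span R {x : A | ∃ μ : Λ, μ < l ∧ ∃ p σ q, x = C μ p σ q}

open Classical in
noncomputable def topCoeff (lamF : (Σ l : Λ, M l) → (Σ l : Λ, M l) → Λ)
    (kap : (Σ l : Λ, M l) → (Σ l : Λ, M l) → R)
    (sigF : ∀ (l₁ : Λ), G l₁ → ∀ (q₁ : M l₁) (l₂ : Λ) (p₂ : M l₂),
      G l₂ → G (lamF ⟨l₁, q₁⟩ ⟨l₂, p₂⟩))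
    (pF : ∀ (l₁ : Λ), M l₁ → G l₁ → ∀ (q₁ : M l₁) (l₂ : Λ) (p₂ : M l₂),
      M (lamF ⟨l₁, q₁⟩ ⟨l₂, p₂⟩))
    (i : Σ l : Λ, M l × G l × M l) (l : Λ) (p' : M l) (τ : G l) (p : M l) : R :=
  if h : lamF ⟨i.1, i.2.2.2⟩ ⟨l, p⟩ = l then
    if h ▸ pF i.1 i.2.1 i.2.2.1 i.2.2.2 l p = p' ∧ h ▸ sigF i.1 i.2.2.1 i.2.2.2 l p 1 = τ then
      kap ⟨i.1, i.2.2.2⟩ ⟨l, p⟩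
    else 0
  else 0

variable {C : ∀ l : Λ, M l → G l → M l → A}
  {lamF : (Σ l : Λ, M l) → (Σ l : Λ, M l) → Λ} {kap : (Σ l : Λ, M l) → (Σ l : Λ, M l) → R}
  {sigF : ∀ (l₁ : Λ), G l₁ → ∀ (q₁ : M l₁) (l₂ : Λ) (p₂ : M l₂),
    G l₂ → G (lamF ⟨l₁, q₁⟩ ⟨l₂, p₂⟩)}
  {pF : ∀ (l₁ : Λ), M l₁ → G l₁ → ∀ (q₁ : M l₁) (l₂ : Λ) (p₂ : M l₂),
    M (lamF ⟨l₁, q₁⟩ ⟨l₂, p₂⟩)}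
  {qF : ∀ (l₁ : Λ), M l₁ → G l₁ → ∀ (q₁ : M l₁) (l₂ : Λ) (p₂ : M l₂),
    G l₂ → M l₂ → M (lamF ⟨l₁, q₁⟩ ⟨l₂, p₂⟩)}

theorem mul_eq_smul_of_lamF_eq
    (hmul : ∀ (l₁ : Λ) (p₁ : M l₁) (σ₁ : G l₁) (q₁ : M l₁)
      (l₂ : Λ) (p₂ : M l₂) (σ₂ : G l₂) (q₂ : M l₂),
      C l₁ p₁ σ₁ q₁ * C l₂ p₂ σ₂ q₂ =
        kap ⟨l₁, q₁⟩ ⟨l₂, p₂⟩ •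
          C (lamF ⟨l₁, q₁⟩ ⟨l₂, p₂⟩) (pF l₁ p₁ σ₁ q₁ l₂ p₂)
            (sigF l₁ σ₁ q₁ l₂ p₂ σ₂) (qF l₁ p₁ σ₁ q₁ l₂ p₂ σ₂ q₂))
    (hq : ∀ (l₁ : Λ) (p₁ : M l₁) (σ₁ : G l₁) (q₁ : M l₁)
      (l₂ : Λ) (p₂ : M l₂) (σ₂ : G l₂) (q₂ : M l₂)
      (h : lamF ⟨l₁, q₁⟩ ⟨l₂, p₂⟩ = l₂),
      h ▸ qF l₁ p₁ σ₁ q₁ l₂ p₂ σ₂ q₂ = q₂)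
    (hsig : ∀ (l₁ : Λ) (σ₁ : G l₁) (q₁ : M l₁)
      (l₂ : Λ) (p₂ : M l₂) (σ₂ : G l₂)
      (h : lamF ⟨l₁, q₁⟩ ⟨l₂, p₂⟩ = l₂),
      (h ▸ sigF l₁ σ₁ q₁ l₂ p₂ σ₂) * σ₂⁻¹ = h ▸ sigF l₁ σ₁ q₁ l₂ p₂ 1)
    {l₁ : Λ} (p₁ : M l₁) (σ₁ : G l₁) (q₁ : M l₁) {l : Λ} (p : M l) (σ : G l) (q : M l)
    (h : lamF ⟨l₁, q₁⟩ ⟨l, p⟩ = l) :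
    C l₁ p₁ σ₁ q₁ * C l p σ q =
      kap ⟨l₁, q₁⟩ ⟨l, p⟩ • C l (h ▸ pF l₁ p₁ σ₁ q₁ l p) ((h ▸ sigF l₁ σ₁ q₁ l p 1) * σ) q := by
  rw [hmul, apply_eq_apply_subst C h, hq l₁ p₁ σ₁ q₁ l p σ q h, ← hsig l₁ σ₁ q₁ l p σ h,
    inv_mul_cancel_right]

theorem mul_sub_sum_topCoeff_smul_mem_lowerSpan [PartialOrder Λ]
    (hle₂ : ∀ x y, lamF x y ≤ y.1)
    (hmul : ∀ (l₁ : Λ) (p₁ : M l₁) (σ₁ : G l₁) (q₁ : M l₁)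
      (l₂ : Λ) (p₂ : M l₂) (σ₂ : G l₂) (q₂ : M l₂),
      C l₁ p₁ σ₁ q₁ * C l₂ p₂ σ₂ q₂ =
        kap ⟨l₁, q₁⟩ ⟨l₂, p₂⟩ •
          C (lamF ⟨l₁, q₁⟩ ⟨l₂, p₂⟩) (pF l₁ p₁ σ₁ q₁ l₂ p₂)
            (sigF l₁ σ₁ q₁ l₂ p₂ σ₂) (qF l₁ p₁ σ₁ q₁ l₂ p₂ σ₂ q₂))
    (hq : ∀ (l₁ : Λ) (p₁ : M l₁) (σ₁ : G l₁) (q₁ : M l₁)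
      (l₂ : Λ) (p₂ : M l₂) (σ₂ : G l₂) (q₂ : M l₂)
      (h : lamF ⟨l₁, q₁⟩ ⟨l₂, p₂⟩ = l₂),
      h ▸ qF l₁ p₁ σ₁ q₁ l₂ p₂ σ₂ q₂ = q₂)
    (hsig : ∀ (l₁ : Λ) (σ₁ : G l₁) (q₁ : M l₁)
      (l₂ : Λ) (p₂ : M l₂) (σ₂ : G l₂)
      (h : lamF ⟨l₁, q₁⟩ ⟨l₂, p₂⟩ = l₂),
      (h ▸ sigF l₁ σ₁ q₁ l₂ p₂ σ₂) * σ₂⁻¹ = h ▸ sigF l₁ σ₁ q₁ l₂ p₂ 1)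
    [∀ l, Fintype (G l)] [∀ l, Fintype (M l)]
    (i : Σ l : Λ, M l × G l × M l) {l : Λ} (p q : M l) (σ : G l) :
    C i.1 i.2.1 i.2.2.1 i.2.2.2 * C l p σ q -
        ∑ σ' : G l, ∑ p' : M l, topCoeff lamF kap sigF pF i l p' (σ' * σ⁻¹) p • C l p' σ' q ∈
      lowerSpan R C l := by
  obtain ⟨l₁, p₁, σ₁, q₁⟩ := i
  by_cases h : lamF ⟨l₁, q₁⟩ ⟨l, p⟩ = l
  · simp only [topCoeff, dif_pos h]
    rw [sum_sum_ite_smul, mul_eq_smul_of_lamF_eq hmul hq hsig p₁ σ₁ q₁ p σ q h, sub_self]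
    exact zero_mem _
  · have hlt : lamF ⟨l₁, q₁⟩ ⟨l, p⟩ < l := (hle₂ _ _).lt_of_ne h
    simp only [topCoeff, dif_neg h, zero_smul, sum_const_zero, sub_zero, hmul]
    exact Submodule.smul_mem _ _ (Submodule.subset_span ⟨_, hlt, _, _, _, rfl⟩)

end DiagramLike

theorem stmt_13_general {R : Type*} [CommRing R] {A : Type*} [Ring A] [Algebra R A]
    {Λ : Type*} [PartialOrder Λ]
    (G : Λ → Type*) [∀ l, Group (G l)] [∀ l, Fintype (G l)]
    (M : Λ → Type*) [∀ l, Fintype (M l)]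
    (C : ∀ l : Λ, M l → G l → M l → A)
    (b : Module.Basis (Σ l : Λ, M l × G l × M l) R A)
    (hb : ∀ i : Σ l : Λ, M l × G l × M l, b i = C i.1 i.2.1 i.2.2.1 i.2.2.2)
    -- the data determining products of basis elements, with the dependency
    -- conditions built into their types:
    (lamF : (Σ l : Λ, M l) → (Σ l : Λ, M l) → Λ)
    (kap : (Σ l : Λ, M l) → (Σ l : Λ, M l) → R)
    (sigF : ∀ (l₁ : Λ), G l₁ → ∀ (q₁ : M l₁) (l₂ : Λ) (p₂ : M l₂),
      G l₂ → G (lamF ⟨l₁, q₁⟩ ⟨l₂, p₂⟩))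
    (pF : ∀ (l₁ : Λ), M l₁ → G l₁ → ∀ (q₁ : M l₁) (l₂ : Λ) (p₂ : M l₂),
      M (lamF ⟨l₁, q₁⟩ ⟨l₂, p₂⟩))
    (qF : ∀ (l₁ : Λ), M l₁ → G l₁ → ∀ (q₁ : M l₁) (l₂ : Λ) (p₂ : M l₂),
      G l₂ → M l₂ → M (lamF ⟨l₁, q₁⟩ ⟨l₂, p₂⟩))
    -- dependency condition (1): λ ≤ λ₁ and λ ≤ λ₂
    (hle₂ : ∀ x y, lamF x y ≤ y.1)
    -- the multiplication rule
    (hmul : ∀ (l₁ : Λ) (p₁ : M l₁) (σ₁ : G l₁) (q₁ : M l₁)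
      (l₂ : Λ) (p₂ : M l₂) (σ₂ : G l₂) (q₂ : M l₂),
      C l₁ p₁ σ₁ q₁ * C l₂ p₂ σ₂ q₂ =
        kap ⟨l₁, q₁⟩ ⟨l₂, p₂⟩ •
          C (lamF ⟨l₁, q₁⟩ ⟨l₂, p₂⟩) (pF l₁ p₁ σ₁ q₁ l₂ p₂)
            (sigF l₁ σ₁ q₁ l₂ p₂ σ₂) (qF l₁ p₁ σ₁ q₁ l₂ p₂ σ₂ q₂))
    -- dependency condition (5): if λ = λ₂ then q = q₂ and σσ₂⁻¹ depends only
    -- on (σ₁, q₁, p₂)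
    (hq : ∀ (l₁ : Λ) (p₁ : M l₁) (σ₁ : G l₁) (q₁ : M l₁)
      (l₂ : Λ) (p₂ : M l₂) (σ₂ : G l₂) (q₂ : M l₂)
      (h : lamF ⟨l₁, q₁⟩ ⟨l₂, p₂⟩ = l₂),
      h ▸ qF l₁ p₁ σ₁ q₁ l₂ p₂ σ₂ q₂ = q₂)
    (hsig : ∀ (l₁ : Λ) (σ₁ : G l₁) (q₁ : M l₁)
      (l₂ : Λ) (p₂ : M l₂) (σ₂ : G l₂)
      (h : lamF ⟨l₁, q₁⟩ ⟨l₂, p₂⟩ = l₂),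
      (h ▸ sigF l₁ σ₁ q₁ l₂ p₂ σ₂) * σ₂⁻¹ = h ▸ sigF l₁ σ₁ q₁ l₂ p₂ 1) :
    -- conclusion: axiom (W3) of a naive-cellular algebra
    ∃ r : A → ∀ l : Λ, M l → G l → M l → R,
      ∀ (a : A) (l : Λ) (p q : M l) (σ : G l),
        a * C l p σ q -
          ∑ σ' : G l, ∑ p' : M l, r a l p' (σ' * σ⁻¹) p • C l p' σ' q
        ∈ Submodule.span R
            {x : A | ∃ μ : Λ, μ < l ∧ ∃ p'' σ'' q'', x = C μ p'' σ'' q''} := by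
  refine ⟨fun a l p' τ p => b.constr R (fun i => topCoeff lamF kap sigF pF i l p' τ p) a, ?_⟩
  intro a l p q σ
  change _ ∈ lowerSpan R C l
  let defect : A →ₗ[R] A := LinearMap.mulRight R (C l p σ q) -
    ∑ σ' : G l, ∑ p' : M l,
      (b.constr R fun i => topCoeff lamF kap sigF pF i l p' (σ' * σ⁻¹) p).smulRight (C l p' σ' q)
  suffices hdefect : ∀ x, defect x ∈ lowerSpan R C l by simpa [defect] using hdefect a
  refine b.map_mem_of_forall_basis defect fun i => ?_
  have hi := mul_sub_sum_topCoeff_smul_mem_lowerSpan hle₂ hmul hq hsig i p q σ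
  rw [← hb i] at hi
  simpa [defect] using hi

/-- A diagram-like algebra is naive-cellular: if an associative unital `R`-algebra `A` is
free on a basis `C^σ_{p,q}` indexed by `∐_λ M(λ) × G(λ) × M(λ)` and the product of two
basis elements `C^{σ₁}_{p₁,q₁} · C^{σ₂}_{p₂,q₂}` is `κ · C^{σ}_{p,q}` where the target
index `λ ≤ λ₁, λ₂` and `κ` depend only on `(q₁,p₂)`, `σ` depends only on
`(σ₁,q₁,p₂,σ₂)`, `p` depends only on `(p₁,σ₁,q₁,p₂)`, and when `λ = λ₂` one has `q = q₂`
with `σσ₂⁻¹` depending only on `(σ₁,q₁,p₂)` — then axiom (W3) holds: there are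
coefficients `r_a(p',τ,p)` with
`a · C^σ_{p,q} ≡ ∑_{σ',p'} r_a(p',σ'σ⁻¹,p) C^{σ'}_{p',q}` modulo `I_{<λ}`. -/
theorem stmt_13 {R : Type*} [CommRing R] {A : Type*} [Ring A] [Algebra R A]
    {Λ : Type*} [PartialOrder Λ]
    (G : Λ → Type*) [∀ l, Group (G l)] [∀ l, Fintype (G l)]
    (M : Λ → Type*) [∀ l, Fintype (M l)]
    (C : ∀ l : Λ, M l → G l → M l → A)
    (b : Module.Basis (Σ l : Λ, M l × G l × M l) R A)
    (hb : ∀ i : Σ l : Λ, M l × G l × M l, b i = C i.1 i.2.1 i.2.2.1 i.2.2.2)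
    -- the data determining products of basis elements, with the dependency
    -- conditions built into their types:
    (lamF : (Σ l : Λ, M l) → (Σ l : Λ, M l) → Λ)
    (kap : (Σ l : Λ, M l) → (Σ l : Λ, M l) → R)
    (sigF : ∀ (l₁ : Λ), G l₁ → ∀ (q₁ : M l₁) (l₂ : Λ) (p₂ : M l₂),
      G l₂ → G (lamF ⟨l₁, q₁⟩ ⟨l₂, p₂⟩))
    (pF : ∀ (l₁ : Λ), M l₁ → G l₁ → ∀ (q₁ : M l₁) (l₂ : Λ) (p₂ : M l₂),
      M (lamF ⟨l₁, q₁⟩ ⟨l₂, p₂⟩))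
    (qF : ∀ (l₁ : Λ), M l₁ → G l₁ → ∀ (q₁ : M l₁) (l₂ : Λ) (p₂ : M l₂),
      G l₂ → M l₂ → M (lamF ⟨l₁, q₁⟩ ⟨l₂, p₂⟩))
    -- dependency condition (1): λ ≤ λ₁ and λ ≤ λ₂
    (hle₁ : ∀ x y, lamF x y ≤ x.1) (hle₂ : ∀ x y, lamF x y ≤ y.1)
    -- the multiplication rule
    (hmul : ∀ (l₁ : Λ) (p₁ : M l₁) (σ₁ : G l₁) (q₁ : M l₁)
      (l₂ : Λ) (p₂ : M l₂) (σ₂ : G l₂) (q₂ : M l₂),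
      C l₁ p₁ σ₁ q₁ * C l₂ p₂ σ₂ q₂ =
        kap ⟨l₁, q₁⟩ ⟨l₂, p₂⟩ •
          C (lamF ⟨l₁, q₁⟩ ⟨l₂, p₂⟩) (pF l₁ p₁ σ₁ q₁ l₂ p₂)
            (sigF l₁ σ₁ q₁ l₂ p₂ σ₂) (qF l₁ p₁ σ₁ q₁ l₂ p₂ σ₂ q₂))
    -- dependency condition (5): if λ = λ₂ then q = q₂ and σσ₂⁻¹ depends only
    -- on (σ₁, q₁, p₂)
    (hq : ∀ (l₁ : Λ) (p₁ : M l₁) (σ₁ : G l₁) (q₁ : M l₁)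
      (l₂ : Λ) (p₂ : M l₂) (σ₂ : G l₂) (q₂ : M l₂)
      (h : lamF ⟨l₁, q₁⟩ ⟨l₂, p₂⟩ = l₂),
      h ▸ qF l₁ p₁ σ₁ q₁ l₂ p₂ σ₂ q₂ = q₂)
    (hsig : ∀ (l₁ : Λ) (σ₁ : G l₁) (q₁ : M l₁)
      (l₂ : Λ) (p₂ : M l₂) (σ₂ : G l₂)
      (h : lamF ⟨l₁, q₁⟩ ⟨l₂, p₂⟩ = l₂),
      (h ▸ sigF l₁ σ₁ q₁ l₂ p₂ σ₂) * σ₂⁻¹ = h ▸ sigF l₁ σ₁ q₁ l₂ p₂ 1) :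
    -- conclusion: axiom (W3) of a naive-cellular algebra
    ∃ r : A → ∀ l : Λ, M l → G l → M l → R,
      ∀ (a : A) (l : Λ) (p q : M l) (σ : G l),
        a * C l p σ q -
          ∑ σ' : G l, ∑ p' : M l, r a l p' (σ' * σ⁻¹) p • C l p' σ' q
        ∈ Submodule.span R
            {x : A | ∃ μ : Λ, μ < l ∧ ∃ p'' σ'' q'', x = C μ p'' σ'' q''} :=
  stmt_13_general G M C b hb lamF kap sigF pF qF hle₂ hmul hq hsig
end

section
/- Let A be a naive-cellular algebra with datum (Λ, G, M, C, *), and let X ⊆ Λ be downward closed. Then I_X = Span_R{C^σ_{p,q} : the index μ of C^σ_{p,q} lies in X} is a twosided ideal of A. -/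
/-!
Left multiplication by `a` sends a basis element `C^σ_{p,q}` with index `l ∈ X` to a combination
of basis elements of index `l` plus an element of the span of indices `< l`, which lies in `I_X`
because `X` is downward closed. Right multiplication is reduced to left multiplication through
the anti-involution: `x * a = (a* x*)*`, and `*` permutes the basis elements of each index.
-/

open Submodule

section SpanIdeal

theorem Submodule.apply_mem_span_of_forall_apply_mem {R M : Type*} [Semiring R]
    [AddCommMonoid M] [Module R M] {S : Set M} {f : M →ₗ[R] M}
    (h : ∀ s ∈ S, f s ∈ span R S) {x : M} (hx : x ∈ span R S) : f x ∈ span R S :=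
  (map_span_le f S _).mpr h (mem_map_of_mem hx)

variable {R A : Type*} [CommSemiring R] [Semiring A] [Algebra R A] {S : Set A}

theorem Submodule.mul_mem_span_of_forall_mul_mem {a : A} (h : ∀ s ∈ S, a * s ∈ span R S)
    {x : A} (hx : x ∈ span R S) : a * x ∈ span R S :=
  apply_mem_span_of_forall_apply_mem (f := LinearMap.mulLeft R a) h hx

theorem Submodule.mul_mem_span_of_antiInvolution (st : A →ₗ[R] A)
    (hanti : ∀ a c : A, st (a * c) = st c * st a) (hinv : ∀ a : A, st (st a) = a)
    (hst : ∀ s ∈ S, st s ∈ span R S) (hleft : ∀ a, ∀ s ∈ S, a * s ∈ span R S)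
    (a : A) {x : A} (hx : x ∈ span R S) : x * a ∈ span R S := by
  have hstx : st a * st x ∈ span R S :=
    mul_mem_span_of_forall_mul_mem (hleft (st a)) (apply_mem_span_of_forall_apply_mem hst hx)
  simpa only [hanti, hinv] using apply_mem_span_of_forall_apply_mem hst hstx

end SpanIdeal

section Cellular

variable {R A : Type*} [CommSemiring R] [AddCommMonoid A] [Module R A] {Λ : Type*}
  {G M : Λ → Type*}

def cellSet (C : ∀ l : Λ, M l → G l → M l → A) (X : Set Λ) : Set A :=
  {y : A | ∃ l ∈ X, ∃ p σ q, y = C l p σ q}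

variable (R) in
def cellSpan (C : ∀ l : Λ, M l → G l → M l → A) (X : Set Λ) : Submodule R A :=
  span R (cellSet C X)

variable {C : ∀ l : Λ, M l → G l → M l → A} {X : Set Λ}

theorem cellSpan_mono {Y : Set Λ} (h : X ⊆ Y) : cellSpan R C X ≤ cellSpan R C Y := by
  refine span_mono ?_
  rintro _ ⟨l, hl, p, σ, q, rfl⟩
  exact ⟨l, h hl, p, σ, q, rfl⟩

theorem cell_mem_cellSpan {l : Λ} (hl : l ∈ X) (p : M l) (σ : G l) (q : M l) :
    C l p σ q ∈ cellSpan R C X :=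
  subset_span ⟨l, hl, p, σ, q, rfl⟩

end Cellular

theorem mul_cell_mem_cellSpan {R A : Type*} [CommSemiring R] [Ring A] [Module R A]
    {Λ : Type*} [Preorder Λ] {G M : Λ → Type*} [∀ l, Group (G l)] [∀ l, Fintype (G l)]
    [∀ l, Fintype (M l)] {C : ∀ l : Λ, M l → G l → M l → A} {X : Set Λ}
    (r : A → ∀ l : Λ, M l → G l → M l → R)
    (hW3 : ∀ (a : A) (l : Λ) (p q : M l) (σ : G l),
      a * C l p σ q - ∑ σ' : G l, ∑ p' : M l, r a l p' (σ' * σ⁻¹) p • C l p' σ' q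
        ∈ cellSpan R C (Set.Iio l))
    (hX : IsLowerSet X) (a : A) {l : Λ} (hl : l ∈ X) (p : M l) (σ : G l) (q : M l) :
    a * C l p σ q ∈ cellSpan R C X := by
  have hlower : cellSpan R C (Set.Iio l) ≤ cellSpan R C X :=
    cellSpan_mono fun _ hμ => hX (le_of_lt hμ) hl
  have hsum : ∑ σ' : G l, ∑ p' : M l, r a l p' (σ' * σ⁻¹) p • C l p' σ' q ∈ cellSpan R C X :=
    sum_mem fun σ' _ => sum_mem fun p' _ => smul_mem _ _ (cell_mem_cellSpan hl p' σ' q)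
  simpa only [sub_add_cancel] using add_mem (hlower (hW3 a l p q σ)) hsum

theorem stmt_15_general {R : Type*} [CommRing R] {A : Type*} [Ring A] [Algebra R A]
    {Λ : Type*} [PartialOrder Λ]
    (G : Λ → Type*) [∀ l, Group (G l)] [∀ l, Fintype (G l)]
    (M : Λ → Type*) [∀ l, Fintype (M l)]
    (C : ∀ l : Λ, M l → G l → M l → A)
    -- the anti-involution (axiom W2)
    (st : A →ₗ[R] A)
    (hanti : ∀ a c : A, st (a * c) = st c * st a)
    (hinv : ∀ a : A, st (st a) = a)
    (hst : ∀ (l : Λ) (p : M l) (σ : G l) (q : M l),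
      st (C l p σ q) = C l q σ⁻¹ p)
    -- axiom (W3)
    (r : A → ∀ l : Λ, M l → G l → M l → R)
    (hW3 : ∀ (a : A) (l : Λ) (p q : M l) (σ : G l),
      a * C l p σ q -
        ∑ σ' : G l, ∑ p' : M l, r a l p' (σ' * σ⁻¹) p • C l p' σ' q
      ∈ Submodule.span R
          {x : A | ∃ μ : Λ, μ < l ∧ ∃ p'' σ'' q'', x = C μ p'' σ'' q''})
    (X : Set Λ) (hX : IsLowerSet X) :
    ∀ a x : A,
      x ∈ Submodule.span R {y : A | ∃ l ∈ X, ∃ p σ q, y = C l p σ q} →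
      a * x ∈ Submodule.span R {y : A | ∃ l ∈ X, ∃ p σ q, y = C l p σ q} ∧
      x * a ∈ Submodule.span R {y : A | ∃ l ∈ X, ∃ p σ q, y = C l p σ q} := by
  have hleft : ∀ a, ∀ s ∈ cellSet C X, a * s ∈ cellSpan R C X := by
    rintro a _ ⟨l, hl, p, σ, q, rfl⟩
    exact mul_cell_mem_cellSpan r hW3 hX a hl p σ q
  have hstar : ∀ s ∈ cellSet C X, st s ∈ cellSpan R C X := by
    rintro _ ⟨l, hl, p, σ, q, rfl⟩
    exact hst l p σ q ▸ cell_mem_cellSpan hl q σ⁻¹ p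
  intro a x hx
  exact ⟨mul_mem_span_of_forall_mul_mem (hleft a) hx,
    mul_mem_span_of_antiInvolution st hanti hinv hstar hleft a hx⟩

/-- In a naive-cellular algebra, for a downward closed subset `X ⊆ Λ`, the span `I_X` of
the basis elements with index in `X` is a twosided ideal. -/
theorem stmt_15 {R : Type*} [CommRing R] {A : Type*} [Ring A] [Algebra R A]
    {Λ : Type*} [PartialOrder Λ]
    (G : Λ → Type*) [∀ l, Group (G l)] [∀ l, Fintype (G l)]
    (M : Λ → Type*) [∀ l, Fintype (M l)]
    (C : ∀ l : Λ, M l → G l → M l → A)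
    (b : Module.Basis (Σ l : Λ, M l × G l × M l) R A)
    (hb : ∀ i : Σ l : Λ, M l × G l × M l, b i = C i.1 i.2.1 i.2.2.1 i.2.2.2)
    -- the anti-involution (axiom W2)
    (st : A →ₗ[R] A)
    (hanti : ∀ a c : A, st (a * c) = st c * st a)
    (hinv : ∀ a : A, st (st a) = a)
    (hst : ∀ (l : Λ) (p : M l) (σ : G l) (q : M l),
      st (C l p σ q) = C l q σ⁻¹ p)
    -- axiom (W3)
    (r : A → ∀ l : Λ, M l → G l → M l → R)
    (hW3 : ∀ (a : A) (l : Λ) (p q : M l) (σ : G l),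
      a * C l p σ q -
        ∑ σ' : G l, ∑ p' : M l, r a l p' (σ' * σ⁻¹) p • C l p' σ' q
      ∈ Submodule.span R
          {x : A | ∃ μ : Λ, μ < l ∧ ∃ p'' σ'' q'', x = C μ p'' σ'' q''})
    (X : Set Λ) (hX : IsLowerSet X) :
    ∀ a x : A,
      x ∈ Submodule.span R {y : A | ∃ l ∈ X, ∃ p σ q, y = C l p σ q} →
      a * x ∈ Submodule.span R {y : A | ∃ l ∈ X, ∃ p σ q, y = C l p σ q} ∧
      x * a ∈ Submodule.span R {y : A | ∃ l ∈ X, ∃ p σ q, y = C l p σ q} :=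
  stmt_15_general G M C st hanti hinv hst r hW3 X hX
end
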